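/- Let γ₁ = e^{135} − e^{146} − e^{236} − e^{245}, γ₂ = e^{136} + e^{145} + e^{235} − e^{246}, σ = e^{127} + e^{347} + e^{567}, and let φ = a·γ₁ + b·γ₂ + c·σ for real numbers a, b, c. Then φ(e₂,e₃,e₅) + φ(e₁,e₄,e₅) + φ(e₁,e₃,e₆) = 3b and φ(e₁,e₄,e₆) + φ(e₂,e₃,e₆) + φ(e₂,e₄,e₅) = −3a. Consequently, if both of these sums vanish, then φ = c·σ and φ is not definite: indeed (ι_{e₁}φ) ∧ (ι_{e₁}φ) = 0. -/

import Mathlib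

open AlternatingMap

/-- `ℝ⁷`. -/
abbrev V7 : Type := Fin 7 → ℝ

/-- Wedge product of real-valued alternating forms on `V7`. -/
noncomputable def wedge {m n : ℕ} (φ : V7 [⋀^Fin m]→ₗ[ℝ] ℝ) (ψ : V7 [⋀^Fin n]→ₗ[ℝ] ℝ) :
    V7 [⋀^Fin (m + n)]→ₗ[ℝ] ℝ :=
  ((TensorProduct.lid ℝ ℝ).toLinearMap.compAlternatingMap (φ.domCoprod ψ)).domDomCongr
    finSumFinEquiv

/-- The dual basis covector `eⁱ` (1-indexed: `i = 1, …, 7`) as a 1-form on `ℝ⁷`. -/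
noncomputable def eF (i : ℕ) : V7 [⋀^Fin 1]→ₗ[ℝ] ℝ :=
  AlternatingMap.ofSubsingleton ℝ V7 ℝ (0 : Fin 1) (LinearMap.proj (Fin.ofNat 7 (i - 1)))

/-- `e^{ij} := eⁱ ∧ eʲ` (1-indexed). -/
noncomputable def eW2 (i j : ℕ) : V7 [⋀^Fin 2]→ₗ[ℝ] ℝ := wedge (eF i) (eF j)

/-- `e^{ijk} := eⁱ ∧ eʲ ∧ eᵏ` (1-indexed). -/
noncomputable def eW3 (i j k : ℕ) : V7 [⋀^Fin 3]→ₗ[ℝ] ℝ := wedge (wedge (eF i) (eF j)) (eF k)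

/-- The volume form `e^{1234567} = e¹∧e²∧e³∧e⁴∧e⁵∧e⁶∧e⁷`. -/
noncomputable def vol7 : V7 [⋀^Fin 7]→ₗ[ℝ] ℝ :=
  wedge (wedge (wedge (wedge (wedge (wedge (eF 1) (eF 2)) (eF 3)) (eF 4)) (eF 5)) (eF 6)) (eF 7)

/-- The standard basis vector `eᵢ` of `ℝ⁷` (1-indexed: `i = 1, …, 7`). -/
noncomputable def bV (i : ℕ) : V7 := Pi.single (Fin.ofNat 7 (i - 1)) 1

/-- Interior product `ι_v φ` of a vector with a 3-form: `(x, y) ↦ φ (v, x, y)`. -/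
noncomputable def iprod (v : V7) (φ : V7 [⋀^Fin 3]→ₗ[ℝ] ℝ) : V7 [⋀^Fin 2]→ₗ[ℝ] ℝ :=
  φ.curryLeft v

/-- The 7-form `(ι_v φ) ∧ (ι_v φ) ∧ φ`. -/
noncomputable def G2vol (v : V7) (φ : V7 [⋀^Fin 3]→ₗ[ℝ] ℝ) : V7 [⋀^Fin 7]→ₗ[ℝ] ℝ :=
  wedge (wedge (iprod v φ) (iprod v φ)) φ

/-- A 3-form on `ℝ⁷` is definite if `(ι_vφ)∧(ι_vφ)∧φ ≠ 0` for every nonzero `v`. -/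
def IsDefinite (φ : V7 [⋀^Fin 3]→ₗ[ℝ] ℝ) : Prop :=
  ∀ v : V7, v ≠ 0 → G2vol v φ ≠ 0

open scoped TensorProduct
open Equiv

/-!
`e^{ijk}(v₁, v₂, v₃)` is the minor of the matrix `(v₁ v₂ v₃)` in the rows `i, j, k`; evaluating
it on basis vectors gives the two sums. When they vanish, `φ = c σ`, and `ι_{e₁}φ = c e^{27}` is
pulled back along the projection `ℝ⁷ → ℝ²` onto the coordinates `x₂, x₇`. Wedge products commute
with pullback, so `ι_{e₁}φ ∧ ι_{e₁}φ` is the pullback of a `4`-form on `ℝ²`, which vanishes;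
hence `(ι_{e₁}φ) ∧ (ι_{e₁}φ) ∧ φ = 0` although `e₁ ≠ 0`.
-/

namespace AlternatingMap

variable {R M M' N₁ N₂ ιa ιb : Type*} [CommRing R] [AddCommGroup M] [Module R M]
  [AddCommGroup M'] [Module R M'] [AddCommGroup N₁] [Module R N₁] [AddCommGroup N₂] [Module R N₂]
  [Fintype ιa] [Fintype ιb] [DecidableEq ιa] [DecidableEq ιb]

theorem domCoprod_compLinearMap (a : M' [⋀^ιa]→ₗ[R] N₁) (b : M' [⋀^ιb]→ₗ[R] N₂)
    (f : M →ₗ[R] M') :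
    (a.compLinearMap f).domCoprod (b.compLinearMap f) = (a.domCoprod b).compLinearMap f := by
  ext v
  simp only [domCoprod_apply, compLinearMap_apply, _root_.sum_apply]
  refine Finset.sum_congr rfl fun σ _ => ?_
  induction σ using Quotient.inductionOn'
  rfl

end AlternatingMap

theorem Equiv.Perm.sum_decomposeFin {M : Type*} [AddCommMonoid M] {n : ℕ}
    (f : Perm (Fin (n + 1)) → M) :
    ∑ ρ, f ρ = ∑ p : Fin (n + 1), ∑ τ : Perm (Fin n), f (decomposeFin.symm (p, τ)) := by
  rw [← Fintype.sum_prod_type']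
  exact (Fintype.sum_equiv decomposeFin.symm _ _ fun _ => rfl).symm

theorem wedge_apply_mul_factorial {m n : ℕ} (a : V7 [⋀^Fin m]→ₗ[ℝ] ℝ)
    (b : V7 [⋀^Fin n]→ₗ[ℝ] ℝ) (v : Fin (m + n) → V7) :
    (m.factorial * n.factorial : ℝ) * wedge a b v =
      ∑ ρ : Perm (Fin (m + n)), (Perm.sign ρ : ℝ) *
        (a (fun i => v (ρ (Fin.castAdd n i))) * b (fun i => v (ρ (Fin.natAdd m i)))) := by
  have key := congr(TensorProduct.lid ℝ ℝ
    ($(MultilinearMap.domCoprod_alternization_eq a b) (v ∘ finSumFinEquiv)))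
  simp only [MultilinearMap.alternatization_apply, MultilinearMap.domDomCongr_apply,
    MultilinearMap.domCoprod_apply, coe_multilinearMap, AlternatingMap.smul_apply,
    Fintype.card_fin, map_sum, map_nsmul, Units.smul_def, map_zsmul, TensorProduct.lid_tmul] at key
  simp only [zsmul_eq_mul, nsmul_eq_mul, smul_eq_mul, Nat.cast_mul] at key
  rw [wedge, AlternatingMap.domDomCongr_apply, LinearMap.compAlternatingMap_apply,
    LinearEquiv.coe_coe, ← key]
  refine Fintype.sum_equiv (Equiv.permCongr finSumFinEquiv) _ _ fun ρ => ?_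
  simp [Perm.sign_permCongr]

theorem wedge_compLinearMap_eq_zero {E : Type*} [AddCommGroup E] [Module ℝ E]
    [FiniteDimensional ℝ E] {m n : ℕ} (P : V7 →ₗ[ℝ] E) (hE : Module.finrank ℝ E < m + n)
    (a : E [⋀^Fin m]→ₗ[ℝ] ℝ) (b : E [⋀^Fin n]→ₗ[ℝ] ℝ) :
    wedge (a.compLinearMap P) (b.compLinearMap P) = 0 := by
  ext v
  rw [wedge, AlternatingMap.domCoprod_compLinearMap]
  refine AlternatingMap.map_linearDependent
    (((TensorProduct.lid ℝ ℝ).toLinearMap.compAlternatingMap (a.domCoprod b)).domDomCongr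
      finSumFinEquiv) (P ∘ v) fun h => ?_
  have := h.fintype_card_le_finrank
  simp only [Fintype.card_fin] at this
  omega

theorem wedge_zero_left {m n : ℕ} (b : V7 [⋀^Fin n]→ₗ[ℝ] ℝ) :
    wedge (0 : V7 [⋀^Fin m]→ₗ[ℝ] ℝ) b = 0 := by
  simp [wedge, ← AlternatingMap.domCoprod'_apply]

theorem eF_apply (i : ℕ) (w : Fin 1 → V7) : eF i w = w 0 (Fin.ofNat 7 (i - 1)) := rfl

theorem wedge_eF_eF_apply (i j : ℕ) (v : Fin 2 → V7) :
    wedge (eF i) (eF j) v = v 0 (Fin.ofNat 7 (i - 1)) * v 1 (Fin.ofNat 7 (j - 1))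
      - v 1 (Fin.ofNat 7 (i - 1)) * v 0 (Fin.ofNat 7 (j - 1)) := by
  have h := wedge_apply_mul_factorial (eF i) (eF j) v
  simp [Perm.sum_decomposeFin, Fin.sum_univ_succ, eF_apply] at h
  linear_combination h

theorem eW3_apply (i j k : ℕ) (v : Fin 3 → V7) :
    eW3 i j k v =
      !![v 0 (Fin.ofNat 7 (i - 1)), v 1 (Fin.ofNat 7 (i - 1)), v 2 (Fin.ofNat 7 (i - 1));
      v 0 (Fin.ofNat 7 (j - 1)), v 1 (Fin.ofNat 7 (j - 1)), v 2 (Fin.ofNat 7 (j - 1));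
      v 0 (Fin.ofNat 7 (k - 1)), v 1 (Fin.ofNat 7 (k - 1)), v 2 (Fin.ofNat 7 (k - 1))].det := by
  have h := wedge_apply_mul_factorial (wedge (eF i) (eF j)) (eF k) v
  have decomposeFin_symm_two (p : Fin 3) (τ : Perm (Fin 2)) :
      Perm.decomposeFin.symm (p, τ) 2 = swap 0 p (τ 1).succ :=
    Perm.decomposeFin_symm_apply_succ τ p 1
  simp [Perm.sum_decomposeFin, Fin.sum_univ_succ, eF_apply, wedge_eF_eF_apply,
    decomposeFin_symm_two, swap_apply_of_ne_of_ne] at h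
  rw [eW3, Matrix.det_fin_three]
  simp only [Matrix.of_apply, Matrix.cons_val, Matrix.cons_val_zero]
  linear_combination h / 2

theorem bV_ne_zero (i : ℕ) : bV i ≠ 0 := by simp [bV]

theorem not_isDefinite_of_wedge_iprod_self_eq_zero {φ : V7 [⋀^Fin 3]→ₗ[ℝ] ℝ} {v : V7} (hv : v ≠ 0)
    (h : wedge (iprod v φ) (iprod v φ) = 0) : ¬ IsDefinite φ :=
  fun hφ => hφ v hv (by rw [G2vol, h, wedge_zero_left])

noncomputable def formγ₁ : V7 [⋀^Fin 3]→ₗ[ℝ] ℝ := eW3 1 3 5 - eW3 1 4 6 - eW3 2 3 6 - eW3 2 4 5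
noncomputable def formγ₂ : V7 [⋀^Fin 3]→ₗ[ℝ] ℝ := eW3 1 3 6 + eW3 1 4 5 + eW3 2 3 5 - eW3 2 4 6
noncomputable def formσ : V7 [⋀^Fin 3]→ₗ[ℝ] ℝ := eW3 1 2 7 + eW3 3 4 7 + eW3 5 6 7
noncomputable def formφ (a b c : ℝ) : V7 [⋀^Fin 3]→ₗ[ℝ] ℝ := a • formγ₁ + b • formγ₂ + c • formσ

theorem formφ_sum_eq_three_mul (a b c : ℝ) :
    formφ a b c ![bV 2, bV 3, bV 5] + formφ a b c ![bV 1, bV 4, bV 5]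
      + formφ a b c ![bV 1, bV 3, bV 6] = 3 * b := by
  simp [formφ, formγ₁, formγ₂, formσ, eW3_apply, Matrix.det_fin_three, bV, Fin.ext_iff]
  ring

theorem formφ_sum_eq_neg_three_mul (a b c : ℝ) :
    formφ a b c ![bV 1, bV 4, bV 6] + formφ a b c ![bV 2, bV 3, bV 6]
      + formφ a b c ![bV 2, bV 4, bV 5] = -(3 * a) := by
  simp [formφ, formγ₁, formγ₂, formσ, eW3_apply, Matrix.det_fin_three, bV, Fin.ext_iff]
  ring

-- `Fin 7` is 0-indexed: `proj 1`, `proj 6` are `e²`, `e⁷`, so this says `ι_{e₁}(c σ) = c e^{27}`.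
theorem iprod_bV_one_smul_formσ (c : ℝ) : iprod (bV 1) (c • formσ) =
    (c • Matrix.detRowAlternating).compLinearMap
      (LinearMap.pi ![LinearMap.proj 1, LinearMap.proj 6]) := by
  ext w
  rw [AlternatingMap.compLinearMap_apply, iprod, AlternatingMap.curryLeft_apply_apply,
    AlternatingMap.smul_apply, AlternatingMap.smul_apply]
  refine congrArg (c • ·) (Eq.trans ?_ (Matrix.det.eq_1 (Matrix.of _)))
  simp [formσ, eW3_apply, Matrix.det_fin_three, Matrix.det_fin_two, bV, Fin.ext_iff, Fin.ofNat]
  ring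

theorem wedge_iprod_bV_one_smul_formσ_self (c : ℝ) :
    wedge (iprod (bV 1) (c • formσ)) (iprod (bV 1) (c • formσ)) = 0 := by
  rw [iprod_bV_one_smul_formσ]
  exact wedge_compLinearMap_eq_zero _ (by simp) _ _

/-- Evaluations of `φ = a·γ₁ + b·γ₂ + c·σ` and the consequence that if the two displayed
sums vanish then `φ = c·σ` and `φ` is not definite, since `(ι_{e₁}φ)∧(ι_{e₁}φ) = 0`. -/
theorem stmt7 (a b c : ℝ) :
    let γ₁ := eW3 1 3 5 - eW3 1 4 6 - eW3 2 3 6 - eW3 2 4 5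
    let γ₂ := eW3 1 3 6 + eW3 1 4 5 + eW3 2 3 5 - eW3 2 4 6
    let σ := eW3 1 2 7 + eW3 3 4 7 + eW3 5 6 7
    let φ := a • γ₁ + b • γ₂ + c • σ
    (φ ![bV 2, bV 3, bV 5] + φ ![bV 1, bV 4, bV 5] + φ ![bV 1, bV 3, bV 6] = 3 * b) ∧
    (φ ![bV 1, bV 4, bV 6] + φ ![bV 2, bV 3, bV 6] + φ ![bV 2, bV 4, bV 5] = -(3 * a)) ∧
    ((φ ![bV 2, bV 3, bV 5] + φ ![bV 1, bV 4, bV 5] + φ ![bV 1, bV 3, bV 6] = 0 ∧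
      φ ![bV 1, bV 4, bV 6] + φ ![bV 2, bV 3, bV 6] + φ ![bV 2, bV 4, bV 5] = 0) →
      φ = c • σ ∧ wedge (iprod (bV 1) φ) (iprod (bV 1) φ) = 0 ∧ ¬ IsDefinite φ) := by
  intro γ₁ γ₂ σ φ
  have hb := formφ_sum_eq_three_mul a b c
  have ha := formφ_sum_eq_neg_three_mul a b c
  refine ⟨hb, ha, fun ⟨hb₀, ha₀⟩ => ?_⟩
  obtain rfl : b = 0 := by linarith [hb.symm.trans hb₀]
  obtain rfl : a = 0 := by linarith [ha.symm.trans ha₀]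
  have hφ : φ = c • σ := by simp [φ]
  have hι : wedge (iprod (bV 1) φ) (iprod (bV 1) φ) = 0 :=
    hφ ▸ wedge_iprod_bV_one_smul_formσ_self c
  exact ⟨hφ, hι, not_isDefinite_of_wedge_iprod_self_eq_zero (bV_ne_zero 1) hι⟩
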